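/- Let ρ : ℝ³ → [0,∞) be measurable, vanishing outside the cylinder D, with ρ ≤ M everywhere, and define E(x) = ∫ (x−y)|x−y|⁻³ ρ(y) dy. Then there is a constant C, depending only on A, such that E is quasi-Lipschitz: for all x, y ∈ ℝ³ with 0 < |x−y| ≤ 1, |E(x) − E(y)| ≤ C M |x−y| (1 + |log |x−y||), and for all x, y with |x−y| ≥ 1, |E(x) − E(y)| ≤ C M |x−y|. -/

import Mathlib

noncomputable section
open MeasureTheory Real Set

/-- Three-dimensional Euclidean space. -/
abbrev E3 : Type := EuclideanSpace ℝ (Fin 3)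

/-- The cross product on `ℝ³`. -/
def cross3 (a b : E3) : E3 :=
  WithLp.toLp 2 ![a 1 * b 2 - a 2 * b 1, a 2 * b 0 - a 0 * b 2, a 0 * b 1 - a 1 * b 0]

/-- The open cylinder of radius `A` about the `x₁`-axis. -/
def cyl (A : ℝ) : Set E3 := {x : E3 | x 1 ^ 2 + x 2 ^ 2 < A ^ 2}

/-- The external magnetic field `B(x) = ((A² - (x₂²+x₃²))^{-θ}, 0, 0)`. -/
def Bf (A θ : ℝ) (x : E3) : E3 := WithLp.toLp 2 ![(A ^ 2 - (x 1 ^ 2 + x 2 ^ 2)) ^ (-θ), 0, 0]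

/-- The electric field generated by the density `ρ`. -/
def Efield (ρ : E3 → ℝ) (x : E3) : E3 := ∫ y : E3, (ρ y / ‖x - y‖ ^ 3) • (x - y)

/-!
Write `E x - E y = ∫ ρ z • (K (x - z) - K (y - z)) dz` with `K u = u / ‖u‖³` and `h = ‖x - y‖`.
On the ball `‖x - z‖ < 2h` each kernel is bounded by `‖·‖⁻²`, whose integral over a ball of
radius `r` is at most `4πr`; this part is `O(M h)`. Outside that ball
`‖K (x - z) - K (y - z)‖ ≤ 8 h ‖x - z‖⁻³`, and the integral of `‖x - z‖⁻³` over the part of the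
cylinder where `‖x - z‖ ≥ h` is `O(1 + |log h|)`: a ball of radius `s` has volume `O(s³)`, which
gives the logarithm for `h ≤ s ≤ 1`, while it meets the cylinder in volume `O(A² s)` only, which
makes the range `s ≥ 1` converge. Both volume bounds are turned into integral bounds by the
layer-cake inequality `∫_S ‖x - z‖^(-p) ≤ ∫₀^∞ p s^(-p-1) vol (S ∩ ball x s) ds`. For `h ≥ 1`
it suffices that `E` is bounded, by the same argument with `p = 2`.
-/

open Metric

theorem lintegral_Ioi_rpow_of_lt {q : ℝ} (hq : q < -1) {c : ℝ} (hc : 0 < c) :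
    ∫⁻ s in Ioi c, ENNReal.ofReal (s ^ q) = ENNReal.ofReal (-c ^ (q + 1) / (q + 1)) := by
  rw [← ofReal_integral_eq_lintegral_ofReal (integrableOn_Ioi_rpow_of_lt hq hc),
    integral_Ioi_rpow_of_lt hq hc]
  filter_upwards [ae_restrict_mem measurableSet_Ioi] with s hs
  exact rpow_nonneg (hc.trans hs).le q

theorem lintegral_Ioi_mul_rpow_neg_sub_one {p : ℝ} (hp : 0 < p) {d : ℝ} (hd : 0 < d) :
    ∫⁻ s in Ioi d, ENNReal.ofReal (p * s ^ (-p - 1)) = ENNReal.ofReal (d ^ (-p)) := by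
  simp_rw [ENNReal.ofReal_mul hp.le]
  rw [lintegral_const_mul' _ _ ENNReal.ofReal_ne_top,
    lintegral_Ioi_rpow_of_lt (by linarith) hd, ← ENNReal.ofReal_mul hp.le]
  congr 1
  rw [sub_add_cancel]
  field_simp

theorem lintegral_Ioc_inv {a b : ℝ} (ha : 0 < a) (hab : a ≤ b) :
    ∫⁻ s in Ioc a b, ENNReal.ofReal s⁻¹ = ENNReal.ofReal (log (b / a)) := by
  have hint : IntegrableOn (fun s : ℝ => s⁻¹) (Ioc a b) :=
    (intervalIntegral.intervalIntegrable_inv (fun s hs => (ha.trans_le (by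
      rw [uIcc_of_le hab] at hs; exact hs.1)).ne') continuous_id.continuousOn).1
  rw [← ofReal_integral_eq_lintegral_ofReal hint, ← intervalIntegral.integral_of_le hab,
    integral_inv_of_pos ha (ha.trans_le hab)]
  filter_upwards [ae_restrict_mem measurableSet_Ioc] with s hs
  exact inv_nonneg.2 (ha.trans hs.1).le

/-- Tonelli applied to `‖x - z‖ ^ (-p) = ∫_{s > ‖x - z‖} p s^(-p-1) ds`. -/
theorem setLIntegral_norm_sub_rpow_neg_le {E : Type*} [NormedAddCommGroup E]
    [MeasurableSpace E] [OpensMeasurableSpace E] (μ : Measure E) [SFinite μ] (S : Set E) (x : E)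
    {p : ℝ} (hp : 0 < p) :
    ∫⁻ z in S, ENNReal.ofReal (‖x - z‖ ^ (-p)) ∂μ ≤
      ∫⁻ s in Ioi 0, ENNReal.ofReal (p * s ^ (-p - 1)) * μ (S ∩ ball x s) := by
  set c : ℝ → ENNReal := fun s => ENNReal.ofReal (p * s ^ (-p - 1))
  have hpoint : ∀ z, ENNReal.ofReal (‖x - z‖ ^ (-p)) ≤
      ∫⁻ s in Ioi 0, (ball x s).indicator (fun _ => c s) z := by
    intro z
    rcases (norm_nonneg (x - z)).eq_or_lt with hd | hd
    · rw [← hd, zero_rpow (neg_ne_zero.2 hp.ne'), ENNReal.ofReal_zero]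
      exact bot_le
    have hind : ∀ s, (ball x s).indicator (fun _ => c s) z = (Ioi ‖x - z‖).indicator c s := by
      intro s
      simp only [indicator, mem_ball', dist_eq_norm, mem_Ioi]
    simp_rw [hind]
    rw [lintegral_indicator measurableSet_Ioi, Measure.restrict_restrict measurableSet_Ioi,
      Ioi_inter_Ioi, max_eq_left hd.le, lintegral_Ioi_mul_rpow_neg_sub_one hp hd]
  have hmeas : Measurable
      (Function.uncurry fun (z : E) (s : ℝ) => (ball x s).indicator (fun _ => c s) z) := by
    change Measurable fun q : E × ℝ => (ball x q.2).indicator (fun _ => c q.2) q.1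
    simp only [indicator, mem_ball', dist_eq_norm]
    refine Measurable.ite (measurableSet_lt ?_ measurable_snd) ?_ measurable_const
    · exact (continuous_const.sub continuous_id).norm.measurable.comp measurable_fst
    · fun_prop
  calc ∫⁻ z in S, ENNReal.ofReal (‖x - z‖ ^ (-p)) ∂μ
      ≤ ∫⁻ z in S, (∫⁻ s in Ioi 0, (ball x s).indicator (fun _ => c s) z) ∂μ :=
        lintegral_mono hpoint
    _ = ∫⁻ s in Ioi 0, (∫⁻ z in S, (ball x s).indicator (fun _ => c s) z ∂μ) :=
        lintegral_lintegral_swap hmeas.aemeasurable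
    _ = _ := by
        refine lintegral_congr fun s => ?_
        rw [lintegral_indicator_const measurableSet_ball, Measure.restrict_apply measurableSet_ball,
          inter_comm, mul_comm]

theorem measurableSet_cyl (A : ℝ) : MeasurableSet (cyl A) :=
  measurableSet_lt (by fun_prop) measurable_const

theorem volume_ball_fin_three_eq_ofReal (x : E3) {s : ℝ} (hs : 0 ≤ s) :
    volume (ball x s) = ENNReal.ofReal (π * 4 / 3 * s ^ (3 : ℝ)) := by
  rw [EuclideanSpace.volume_ball_fin_three, ← ENNReal.ofReal_pow hs, rpow_ofNat,
    ← ENNReal.ofReal_mul (by positivity), mul_comm]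

theorem ofReal_mul_volume_ball (x : E3) {p s : ℝ} (hp : 0 ≤ p) (hs : 0 < s) :
    ENNReal.ofReal (p * s ^ (-p - 1)) * volume (ball x s) =
      ENNReal.ofReal (π * 4 / 3 * p * s ^ (2 - p)) := by
  rw [volume_ball_fin_three_eq_ofReal x hs.le, ← ENNReal.ofReal_mul (by positivity)]
  congr 1
  rw [mul_mul_mul_comm, ← rpow_add hs]
  ring_nf

theorem volume_cyl_inter_ball_le {A : ℝ} (hA : 0 ≤ A) (x : E3) (s : ℝ) :
    volume (cyl A ∩ ball x s) ≤ ENNReal.ofReal (8 * A ^ 2 * s) := by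
  have hsub : cyl A ∩ ball x s ⊆ (MeasurableEquiv.toLp 2 (Fin 3 → ℝ)).symm ⁻¹'
      univ.pi (fun i => Ioo (![x 0 - s, -A, -A] i) (![x 0 + s, A, A] i)) := by
    rintro z ⟨hz, hzx⟩
    have h0 : |z 0 - x 0| < s := by
      have := PiLp.norm_apply_le (z - x) 0
      rw [← dist_eq_norm] at this
      simp only [PiLp.sub_apply, Real.norm_eq_abs] at this
      exact this.trans_lt (mem_ball.1 hzx)
    have hz' : z 1 ^ 2 + z 2 ^ 2 < A ^ 2 := hz
    have h1 : |z 1| < A := abs_lt_of_sq_lt_sq (by nlinarith) hA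
    have h2 : |z 2| < A := abs_lt_of_sq_lt_sq (by nlinarith) hA
    simp only [mem_preimage, mem_univ_pi]
    intro i
    fin_cases i
    · simpa [sub_lt_comm, sub_lt_iff_lt_add', add_comm, and_comm] using abs_sub_lt_iff.1 h0
    · simpa using abs_lt.1 h1
    · simpa using abs_lt.1 h2
  calc volume (cyl A ∩ ball x s) ≤ _ := measure_mono hsub
    _ = _ := (EuclideanSpace.volume_preserving_symm_measurableEquiv_toLp _).measure_preimage_equiv _
    _ = ENNReal.ofReal (8 * A ^ 2 * s) := by
      rw [Real.volume_pi_Ioo, Fin.prod_univ_three]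
      simp only [Matrix.cons_val_zero, Matrix.cons_val_one, Matrix.cons_val_two,
        Matrix.head_cons, Matrix.tail_cons]
      rw [← ENNReal.ofReal_mul' (by linarith), ← ENNReal.ofReal_mul' (by linarith)]
      congr 1
      ring

theorem lintegral_Ioc_mul_volume_inter_ball_le (S : Set E3) (x : E3) (r : ℝ) :
    ∫⁻ s in Ioc 0 r, ENNReal.ofReal (2 * s ^ (-2 - 1 : ℝ)) * volume (S ∩ ball x s)
      ≤ ENNReal.ofReal (π * 8 / 3 * r) := calc
  _ ≤ ∫⁻ s in Ioc 0 r, ENNReal.ofReal (π * 8 / 3) :=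
      setLIntegral_mono' measurableSet_Ioc fun s hs => by
        grw [inter_subset_right, ofReal_mul_volume_ball x two_pos.le hs.1, sub_self, rpow_zero]
        exact le_of_eq (by ring_nf)
  _ = _ := by
      rw [setLIntegral_const, Real.volume_Ioc, sub_zero, ← ENNReal.ofReal_mul (by positivity)]

theorem lintegral_Ioi_one_mul_volume_cyl_inter_ball_le {A : ℝ} (hA : 0 ≤ A) {S : Set E3}
    (hS : S ⊆ cyl A) (x : E3) {p : ℝ} (hp : 1 < p) :
    ∫⁻ s in Ioi 1, ENNReal.ofReal (p * s ^ (-p - 1)) * volume (S ∩ ball x s)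
      ≤ ENNReal.ofReal (8 * A ^ 2 * p / (p - 1)) := calc
  _ ≤ ∫⁻ s in Ioi 1, ENNReal.ofReal (8 * A ^ 2 * p) * ENNReal.ofReal (s ^ (-p)) :=
      setLIntegral_mono' measurableSet_Ioi fun s hs => by
        have hs0 : (0 : ℝ) < s := one_pos.trans hs
        grw [hS, volume_cyl_inter_ball_le hA, ← ENNReal.ofReal_mul (by positivity),
          ← ENNReal.ofReal_mul (by positivity)]
        refine le_of_eq (congrArg _ ?_)
        rw [rpow_sub_one hs0.ne']
        field_simp
  _ = _ := by
      rw [lintegral_const_mul _ (by fun_prop), lintegral_Ioi_rpow_of_lt (by linarith) one_pos,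
        ← ENNReal.ofReal_mul (by positivity), one_rpow]
      have : p - 1 ≠ 0 := by linarith
      have : -p + 1 ≠ 0 := by linarith
      congr 1
      field_simp
      ring

theorem setLIntegral_ball_norm_sub_rpow_neg_two_le (x : E3) {r : ℝ} (hr : 0 < r) :
    ∫⁻ z in ball x r, ENNReal.ofReal (‖x - z‖ ^ (-2 : ℝ)) ≤ ENNReal.ofReal (4 * π * r) := by
  refine (setLIntegral_norm_sub_rpow_neg_le volume _ x two_pos).trans ?_
  rw [← Ioc_union_Ioi_eq_Ioi hr.le, lintegral_union measurableSet_Ioi Ioc_disjoint_Ioi_same]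
  have hfar : ∫⁻ s in Ioi r, ENNReal.ofReal (2 * s ^ (-2 - 1 : ℝ)) * volume (ball x r ∩ ball x s)
      ≤ ENNReal.ofReal (π * 4 / 3 * r) := calc
    _ ≤ ∫⁻ s in Ioi r, ENNReal.ofReal (2 * s ^ (-2 - 1 : ℝ)) * volume (ball x r) :=
        lintegral_mono fun s => by grw [inter_subset_left]
    _ = _ := by
        rw [lintegral_mul_const _ (by fun_prop), lintegral_Ioi_mul_rpow_neg_sub_one two_pos hr,
          volume_ball_fin_three_eq_ofReal x hr.le, ← ENNReal.ofReal_mul (by positivity),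
          mul_left_comm, ← rpow_add hr]
        norm_num
  calc _ ≤ _ := add_le_add (lintegral_Ioc_mul_volume_inter_ball_le _ x r) hfar
    _ = _ := by
      rw [← ENNReal.ofReal_add (by positivity) (by positivity)]
      ring_nf

theorem setLIntegral_cyl_norm_sub_rpow_neg_two_le {A : ℝ} (hA : 0 ≤ A) (x : E3) :
    ∫⁻ z in cyl A, ENNReal.ofReal (‖x - z‖ ^ (-2 : ℝ)) ≤
      ENNReal.ofReal (π * 8 / 3 + 16 * A ^ 2) := by
  refine (setLIntegral_norm_sub_rpow_neg_le volume _ x two_pos).trans ?_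
  rw [← Ioc_union_Ioi_eq_Ioi zero_le_one,
    lintegral_union measurableSet_Ioi Ioc_disjoint_Ioi_same,
    ENNReal.ofReal_add (by positivity) (by positivity)]
  gcongr
  · simpa using lintegral_Ioc_mul_volume_inter_ball_le (cyl A) x 1
  · refine (lintegral_Ioi_one_mul_volume_cyl_inter_ball_le hA subset_rfl x one_lt_two).trans_eq ?_
    congr 1
    ring

theorem setLIntegral_cyl_far_norm_sub_rpow_neg_three_le {A : ℝ} (hA : 0 ≤ A) (x : E3) {r₀ : ℝ}
    (hr₀ : 0 < r₀) (hr₁ : r₀ ≤ 1) :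
    ∫⁻ z in cyl A ∩ {z | r₀ ≤ ‖x - z‖}, ENNReal.ofReal (‖x - z‖ ^ (-3 : ℝ)) ≤
      ENNReal.ofReal (4 * π * -log r₀ + 12 * A ^ 2) := by
  set S := cyl A ∩ {z | r₀ ≤ ‖x - z‖}
  refine (setLIntegral_norm_sub_rpow_neg_le volume S x three_pos).trans ?_
  have hempty : ∀ s ∈ Ioc 0 r₀, S ∩ ball x s = ∅ := by
    rintro s ⟨-, hs⟩
    refine eq_empty_of_forall_notMem fun z ⟨⟨_, hz⟩, hzs⟩ => ?_
    rw [mem_ball', dist_eq_norm] at hzs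
    exact (hz.trans_lt hzs).not_ge hs
  have hmid : ∫⁻ s in Ioc r₀ 1, ENNReal.ofReal (3 * s ^ (-3 - 1 : ℝ)) * volume (S ∩ ball x s)
      ≤ ENNReal.ofReal (4 * π * -log r₀) := calc
    _ ≤ ∫⁻ s in Ioc r₀ 1, ENNReal.ofReal (4 * π) * ENNReal.ofReal s⁻¹ :=
        setLIntegral_mono' measurableSet_Ioc fun s hs => by
          grw [inter_subset_right, ofReal_mul_volume_ball x zero_le_three (hr₀.trans hs.1),
            ← ENNReal.ofReal_mul (by positivity)]
          refine le_of_eq (congrArg _ ?_)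
          rw [show (2 : ℝ) - 3 = -1 by norm_num, rpow_neg_one]
          ring
    _ = _ := by
        rw [lintegral_const_mul _ (by fun_prop), lintegral_Ioc_inv hr₀ hr₁,
          ← ENNReal.ofReal_mul (by positivity), one_div, log_inv]
  rw [← Ioc_union_Ioi_eq_Ioi hr₀.le, lintegral_union measurableSet_Ioi Ioc_disjoint_Ioi_same,
    setLIntegral_congr_fun measurableSet_Ioc fun s hs => by rw [hempty s hs, measure_empty,
      mul_zero], lintegral_zero, zero_add, ← Ioc_union_Ioi_eq_Ioi hr₁,
    lintegral_union measurableSet_Ioi Ioc_disjoint_Ioi_same,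
    ENNReal.ofReal_add (by have := log_nonpos hr₀.le hr₁; nlinarith [pi_pos]) (by positivity)]
  refine add_le_add hmid ((lintegral_Ioi_one_mul_volume_cyl_inter_ball_le hA inter_subset_left x
    (by norm_num)).trans_eq ?_)
  congr 1
  ring

section Kernel

variable {E : Type*} [NormedAddCommGroup E] [NormedSpace ℝ E]

def coulombKernel (u : E) : E := (‖u‖ ^ 3)⁻¹ • u

theorem norm_coulombKernel (u : E) : ‖coulombKernel u‖ = ‖u‖ ^ (-2 : ℝ) := by
  rw [coulombKernel, norm_smul, norm_inv, norm_pow, norm_norm, rpow_neg (norm_nonneg _),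
    rpow_ofNat]
  rcases (norm_nonneg u).eq_or_lt with h | h
  · simp [← h]
  · field_simp

theorem abs_inv_pow_three_sub_mul_le {a b : ℝ} (ha : 0 < a) (hab : a ≤ 2 * b) :
    |(a ^ 3)⁻¹ - (b ^ 3)⁻¹| * b ≤ 7 * |a - b| / a ^ 3 := by
  have hb : 0 < b := by linarith
  have hsq : a ^ 2 + a * b + b ^ 2 ≤ 7 * b ^ 2 := by nlinarith
  rw [show (a ^ 3)⁻¹ - (b ^ 3)⁻¹ = (b - a) * (a ^ 2 + a * b + b ^ 2) / (a ^ 3 * b ^ 3) by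
      field_simp; ring,
    abs_div, abs_mul, abs_sub_comm, abs_of_pos (by positivity : 0 < a ^ 2 + a * b + b ^ 2),
    abs_of_pos (by positivity : 0 < a ^ 3 * b ^ 3), div_mul_eq_mul_div,
    div_le_div_iff₀ (by positivity) (by positivity)]
  calc |a - b| * (a ^ 2 + a * b + b ^ 2) * b * a ^ 3
      ≤ |a - b| * (7 * b ^ 2) * b * a ^ 3 := by gcongr
    _ = _ := by ring

theorem norm_coulombKernel_sub_le {u v : E} (huv : 2 * ‖u - v‖ ≤ ‖u‖) :
    ‖coulombKernel u - coulombKernel v‖ ≤ 8 * ‖u - v‖ * ‖u‖ ^ (-3 : ℝ) := by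
  rcases (norm_nonneg u).eq_or_lt with hu | hu
  · obtain rfl : u = 0 := norm_eq_zero.1 hu.symm
    obtain rfl : v = 0 := norm_le_zero_iff.1 (by simp at huv; linarith)
    simp [coulombKernel]
  have hab : ‖u‖ ≤ 2 * ‖v‖ := by linarith [norm_sub_norm_le u v]
  have hsplit : coulombKernel u - coulombKernel v =
      (‖u‖ ^ 3)⁻¹ • (u - v) + ((‖u‖ ^ 3)⁻¹ - (‖v‖ ^ 3)⁻¹) • v := by
    simp only [coulombKernel, smul_sub, sub_smul]
    abel
  calc ‖coulombKernel u - coulombKernel v‖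
      ≤ (‖u‖ ^ 3)⁻¹ * ‖u - v‖ + |(‖u‖ ^ 3)⁻¹ - (‖v‖ ^ 3)⁻¹| * ‖v‖ := by
        rw [hsplit]
        grw [norm_add_le, norm_smul, norm_smul, Real.norm_eq_abs, Real.norm_eq_abs,
          abs_of_pos (by positivity : 0 < (‖u‖ ^ 3)⁻¹)]
    _ ≤ ‖u - v‖ / ‖u‖ ^ 3 + 7 * ‖u - v‖ / ‖u‖ ^ 3 := by
        grw [abs_inv_pow_three_sub_mul_le hu hab, abs_norm_sub_norm_le, inv_mul_eq_div]
    _ = _ := by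
        rw [rpow_neg (norm_nonneg _), rpow_ofNat]
        ring

end Kernel

theorem measurable_coulombKernel : Measurable (coulombKernel : E3 → E3) := by
  unfold coulombKernel
  fun_prop

theorem Efield_eq_integral (ρ : E3 → ℝ) (x : E3) :
    Efield ρ x = ∫ z, ρ z • coulombKernel (x - z) := by
  simp only [Efield, coulombKernel, smul_smul, div_eq_mul_inv]

section Field

variable {A M : ℝ} {ρ : E3 → ℝ} {x y : E3}

theorem lintegral_norm_smul_coulombKernel_le (hA : 0 ≤ A) (hbound : ∀ z, |ρ z| ≤ M)
    (hsupp : ∀ z, z ∉ cyl A → ρ z = 0) (x : E3) :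
    ∫⁻ z, ENNReal.ofReal ‖ρ z • coulombKernel (x - z)‖ ≤
      ENNReal.ofReal (M * (π * 8 / 3 + 16 * A ^ 2)) := by
  have hM : 0 ≤ M := (abs_nonneg _).trans (hbound 0)
  calc ∫⁻ z, ENNReal.ofReal ‖ρ z • coulombKernel (x - z)‖
      ≤ ∫⁻ z, (cyl A).indicator
          (fun z => ENNReal.ofReal M * ENNReal.ofReal (‖x - z‖ ^ (-2 : ℝ))) z :=
        lintegral_mono fun z => by
          by_cases hz : z ∈ cyl A
          · rw [indicator_of_mem hz, norm_smul, norm_coulombKernel, Real.norm_eq_abs,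
              ← ENNReal.ofReal_mul hM]
            gcongr
            exact hbound z
          · simp [hsupp z hz]
    _ = ENNReal.ofReal M * ∫⁻ z in cyl A, ENNReal.ofReal (‖x - z‖ ^ (-2 : ℝ)) := by
        rw [lintegral_indicator (measurableSet_cyl A), lintegral_const_mul _ (by fun_prop)]
    _ ≤ _ := by
        grw [setLIntegral_cyl_norm_sub_rpow_neg_two_le hA, ← ENNReal.ofReal_mul hM]

theorem integrable_smul_coulombKernel (hA : 0 ≤ A) (hm : Measurable ρ)
    (hbound : ∀ z, |ρ z| ≤ M) (hsupp : ∀ z, z ∉ cyl A → ρ z = 0) (x : E3) :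
    Integrable (fun z => ρ z • coulombKernel (x - z)) := by
  refine ⟨(hm.smul (measurable_coulombKernel.comp (by fun_prop))).aestronglyMeasurable, ?_⟩
  rw [hasFiniteIntegral_iff_norm]
  exact (lintegral_norm_smul_coulombKernel_le hA hbound hsupp x).trans_lt ENNReal.ofReal_lt_top

theorem norm_Efield_le (hA : 0 ≤ A) (hbound : ∀ z, |ρ z| ≤ M)
    (hsupp : ∀ z, z ∉ cyl A → ρ z = 0) (x : E3) :
    ‖Efield ρ x‖ ≤ M * (π * 8 / 3 + 16 * A ^ 2) := by
  have hM : 0 ≤ M := (abs_nonneg _).trans (hbound 0)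
  rw [Efield_eq_integral]
  exact (norm_integral_le_lintegral_norm _).trans (ENNReal.toReal_le_of_le_ofReal
    (by positivity) (lintegral_norm_smul_coulombKernel_le hA hbound hsupp x))

theorem lintegral_ball_norm_smul_coulombKernel_sub_le (hbound : ∀ z, |ρ z| ≤ M)
    (hxy : 0 < ‖x - y‖) :
    ∫⁻ z in ball x (2 * ‖x - y‖),
        ENNReal.ofReal ‖ρ z • (coulombKernel (x - z) - coulombKernel (y - z))‖
      ≤ ENNReal.ofReal (20 * π * M * ‖x - y‖) := by
  set h := ‖x - y‖
  have hM : 0 ≤ M := (abs_nonneg _).trans (hbound 0)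
  have hsub : ball x (2 * h) ⊆ ball y (3 * h) := by
    refine ball_subset_ball' (le_of_eq ?_)
    rw [dist_eq_norm]
    ring
  calc _ ≤ ∫⁻ z in ball x (2 * h), ENNReal.ofReal M * ENNReal.ofReal (‖x - z‖ ^ (-2 : ℝ)) +
          ENNReal.ofReal M * ENNReal.ofReal (‖y - z‖ ^ (-2 : ℝ)) :=
        lintegral_mono fun z => by
          rw [norm_smul, Real.norm_eq_abs, ← ENNReal.ofReal_mul hM, ← ENNReal.ofReal_mul hM,
            ← ENNReal.ofReal_add (by positivity) (by positivity), ← mul_add,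
            ← norm_coulombKernel, ← norm_coulombKernel]
          gcongr
          · exact hbound z
          · exact norm_sub_le _ _
    _ ≤ ENNReal.ofReal M * (∫⁻ z in ball x (2 * h), ENNReal.ofReal (‖x - z‖ ^ (-2 : ℝ))) +
          ENNReal.ofReal M * ∫⁻ z in ball y (3 * h), ENNReal.ofReal (‖y - z‖ ^ (-2 : ℝ)) := by
        rw [lintegral_add_left (by fun_prop), lintegral_const_mul _ (by fun_prop),
          lintegral_const_mul _ (by fun_prop)]
        exact add_le_add_right (mul_le_mul_right (lintegral_mono_set hsub) _) _
    _ ≤ ENNReal.ofReal M * ENNReal.ofReal (4 * π * (2 * h)) +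
          ENNReal.ofReal M * ENNReal.ofReal (4 * π * (3 * h)) := by
        grw [setLIntegral_ball_norm_sub_rpow_neg_two_le x (by positivity),
          setLIntegral_ball_norm_sub_rpow_neg_two_le y (by positivity)]
    _ = _ := by
        rw [← ENNReal.ofReal_mul hM, ← ENNReal.ofReal_mul hM,
          ← ENNReal.ofReal_add (by positivity) (by positivity)]
        ring_nf

theorem lintegral_compl_ball_norm_smul_coulombKernel_sub_le (hA : 0 ≤ A)
    (hbound : ∀ z, |ρ z| ≤ M) (hsupp : ∀ z, z ∉ cyl A → ρ z = 0) (hxy₀ : 0 < ‖x - y‖)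
    (hxy₁ : ‖x - y‖ ≤ 1) :
    ∫⁻ z in (ball x (2 * ‖x - y‖))ᶜ,
        ENNReal.ofReal ‖ρ z • (coulombKernel (x - z) - coulombKernel (y - z))‖
      ≤ ENNReal.ofReal (8 * M * ‖x - y‖ * (4 * π * -log ‖x - y‖ + 12 * A ^ 2)) := by
  set h := ‖x - y‖ with hh
  have hM : 0 ≤ M := (abs_nonneg _).trans (hbound 0)
  set S := cyl A ∩ {z | h ≤ ‖x - z‖}
  have hS : MeasurableSet S :=
    (measurableSet_cyl A).inter (measurableSet_le measurable_const (by fun_prop))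
  set g : E3 → ENNReal := fun z => ENNReal.ofReal (8 * M * h) * ENNReal.ofReal (‖x - z‖ ^ (-3 : ℝ))
  calc _ ≤ ∫⁻ z in (ball x (2 * h))ᶜ, S.indicator g z :=
        setLIntegral_mono' measurableSet_ball.compl fun z hz => by
          rw [mem_compl_iff, mem_ball', dist_eq_norm, not_lt] at hz
          by_cases hzA : z ∈ cyl A
          · rw [indicator_of_mem (show z ∈ S from ⟨hzA, by simp only [mem_ofPred_eq]; linarith⟩)]
            simp only [g]
            rw [← ENNReal.ofReal_mul (by positivity), norm_smul, Real.norm_eq_abs]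
            have hker := norm_coulombKernel_sub_le (u := x - z) (v := y - z)
              (by rw [sub_sub_sub_cancel_right]; exact hz)
            rw [sub_sub_sub_cancel_right, ← hh] at hker
            exact ENNReal.ofReal_le_ofReal
              ((mul_le_mul (hbound z) hker (norm_nonneg _) hM).trans_eq (by ring))
          · simp [hsupp z hzA]
    _ ≤ ∫⁻ z, S.indicator g z := setLIntegral_le_lintegral _ _
    _ = ENNReal.ofReal (8 * M * h) * ∫⁻ z in S, ENNReal.ofReal (‖x - z‖ ^ (-3 : ℝ)) := by
        rw [lintegral_indicator hS, lintegral_const_mul _ (by fun_prop)]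
    _ ≤ _ := by
        grw [setLIntegral_cyl_far_norm_sub_rpow_neg_three_le hA x hxy₀ hxy₁,
          ← ENNReal.ofReal_mul (by positivity)]

theorem norm_Efield_sub_le (hA : 0 ≤ A) (hm : Measurable ρ) (hbound : ∀ z, |ρ z| ≤ M)
    (hsupp : ∀ z, z ∉ cyl A → ρ z = 0) (hxy₀ : 0 < ‖x - y‖) (hxy₁ : ‖x - y‖ ≤ 1) :
    ‖Efield ρ x - Efield ρ y‖ ≤ M * ‖x - y‖ * (20 * π + 32 * π * -log ‖x - y‖ + 96 * A ^ 2) := by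
  have hM : 0 ≤ M := (abs_nonneg _).trans (hbound 0)
  have hlog : 0 ≤ -log ‖x - y‖ := neg_nonneg.2 (log_nonpos hxy₀.le hxy₁)
  rw [Efield_eq_integral, Efield_eq_integral,
    ← integral_sub (integrable_smul_coulombKernel hA hm hbound hsupp x)
      (integrable_smul_coulombKernel hA hm hbound hsupp y)]
  simp_rw [← smul_sub]
  refine (norm_integral_le_lintegral_norm _).trans (ENNReal.toReal_le_of_le_ofReal
    (by positivity) ?_)
  rw [← lintegral_add_compl _ (measurableSet_ball (x := x) (ε := 2 * ‖x - y‖))]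
  grw [lintegral_ball_norm_smul_coulombKernel_sub_le hbound hxy₀,
    lintegral_compl_ball_norm_smul_coulombKernel_sub_le hA hbound hsupp hxy₀ hxy₁,
    ← ENNReal.ofReal_add (by positivity) (by positivity)]
  exact le_of_eq (congrArg _ (by ring))

end Field

/-- Quasi-Lipschitz property of the electric field generated by a bounded density supported
in the cylinder of radius `A`: `|E(x)−E(y)| ≤ C M |x−y| (1 + |log|x−y||)` for `|x−y| ≤ 1`,
and `|E(x)−E(y)| ≤ C M |x−y|` for `|x−y| ≥ 1`, with `C` depending only on `A`. -/
theorem field_quasi_lipschitz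
    (A : ℝ) (hA : 0 < A) :
    ∃ C : ℝ, 0 < C ∧
      ∀ M : ℝ, 0 < M →
        ∀ ρ : E3 → ℝ, Measurable ρ → (∀ x, 0 ≤ ρ x) → (∀ x, ρ x ≤ M) →
          (∀ x, x ∉ cyl A → ρ x = 0) →
          ∀ x y : E3,
            (0 < ‖x - y‖ → ‖x - y‖ ≤ 1 →
              ‖Efield ρ x - Efield ρ y‖ ≤
                C * M * ‖x - y‖ * (1 + |Real.log ‖x - y‖|)) ∧
            (1 ≤ ‖x - y‖ → ‖Efield ρ x - Efield ρ y‖ ≤ C * M * ‖x - y‖) := by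
  refine ⟨96 * A ^ 2 + 32 * π, by positivity, fun M hM ρ hm hnn hle hsupp x y => ?_⟩
  have hbound : ∀ z, |ρ z| ≤ M := fun z => (abs_of_nonneg (hnn z)).trans_le (hle z)
  refine ⟨fun hxy₀ hxy₁ => ?_, fun hxy => ?_⟩
  · have hlog : 0 ≤ -log ‖x - y‖ := neg_nonneg.2 (log_nonpos hxy₀.le hxy₁)
    have hMh : 0 ≤ M * ‖x - y‖ := by positivity
    grw [norm_Efield_sub_le hA.le hm hbound hsupp hxy₀ hxy₁,
      abs_of_nonpos (log_nonpos hxy₀.le hxy₁)]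
    nlinarith [mul_nonneg hMh pi_pos.le, mul_nonneg (mul_nonneg hMh (sq_nonneg A)) hlog]
  · calc ‖Efield ρ x - Efield ρ y‖ ≤ ‖Efield ρ x‖ + ‖Efield ρ y‖ := norm_sub_le _ _
      _ ≤ 2 * (M * (π * 8 / 3 + 16 * A ^ 2)) := by
        linarith [norm_Efield_le hA.le hbound hsupp x, norm_Efield_le hA.le hbound hsupp y]
      _ ≤ (96 * A ^ 2 + 32 * π) * M * 1 := by nlinarith [pi_pos, sq_nonneg A]
      _ ≤ _ := by gcongr
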